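/- For any pure three-qutrit state, with λ_1^{(a)} ≤ λ_2^{(a)} ≤ λ_3^{(a)} the increasingly ordered eigenvalues of the a-th one-particle reduced density matrix, the inequality λ_2^{(a)} + λ_3^{(a)} ≤ λ_2^{(b)} + λ_1^{(b)} + λ_2^{(c)} + λ_3^{(c)} holds for every permutation (a,b,c) of (1,2,3). -/

import Mathlib

open scoped BigOperators

/-- The one-particle reduced density matrix of the first qutrit. -/
noncomputable def rho1 (c : Fin 3 → Fin 3 → Fin 3 → ℂ) : Matrix (Fin 3) (Fin 3) ℂ :=
  Matrix.of fun i i' => ∑ j : Fin 3, ∑ k : Fin 3, c i j k * (starRingEnd ℂ) (c i' j k)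

/-- The one-particle reduced density matrix of the second qutrit. -/
noncomputable def rho2 (c : Fin 3 → Fin 3 → Fin 3 → ℂ) : Matrix (Fin 3) (Fin 3) ℂ :=
  Matrix.of fun j j' => ∑ i : Fin 3, ∑ k : Fin 3, c i j k * (starRingEnd ℂ) (c i j' k)

/-- The one-particle reduced density matrix of the third qutrit. -/
noncomputable def rho3 (c : Fin 3 → Fin 3 → Fin 3 → ℂ) : Matrix (Fin 3) (Fin 3) ℂ :=
  Matrix.of fun k k' => ∑ i : Fin 3, ∑ j : Fin 3, c i j k * (starRingEnd ℂ) (c i j k')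

/-- `l` lists the eigenvalues of the Hermitian matrix `M` in increasing order. -/
def IsOrderedSpectrum (M : Matrix (Fin 3) (Fin 3) ℂ) (l : Fin 3 → ℝ) : Prop :=
  Monotone l ∧ ∃ hM : M.IsHermitian, ∃ σ : Equiv.Perm (Fin 3),
    ∀ i, l i = hM.eigenvalues (σ i)

/-!
Each spectrum sums to `‖ψ‖² = ∑ |c i j k|²`, so the inequality says
`λ₃⁽ᵇ⁾ + λ₁⁽ᶜ⁾ ≤ ‖ψ‖² + λ₁⁽ᵃ⁾`. Let `u` be a top eigenvector of `ρ⁽ᵇ⁾` and `f₁, f₂, f₃` an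
eigenbasis of `ρ⁽ᵃ⁾` with `f₁` at the bottom. Two linear conditions on a unit vector `s` of
qutrit `c` make the partial contraction `t = ⟨u ⊗ s|ψ⟩` (a vector of qutrit `a`) orthogonal to
`f₂` and `f₃`; a solution exists because qutrit `c` has dimension `3 > 2`. For the commuting
projections `P = |u⟩⟨u|` and `Q = |s⟩⟨s|`, positivity of `(1 - P)(1 - Q)` gives
`⟨P⟩ + ⟨Q⟩ ≤ ‖ψ‖² + ⟨PQ⟩`, that is `λ₃⁽ᵇ⁾ + ⟨s|ρ⁽ᶜ⁾|s⟩ ≤ ‖ψ‖² + ‖t‖²`. Then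
`λ₁⁽ᶜ⁾ ≤ ⟨s|ρ⁽ᶜ⁾|s⟩` (Rayleigh), and `‖t‖² = |⟨f₁ ⊗ u ⊗ s|ψ⟩|² ≤ ⟨f₁|ρ⁽ᵃ⁾|f₁⟩ = λ₁⁽ᵃ⁾`
(Cauchy–Schwarz). Permuting the tensor factors of `ψ` gives every ordering `(a, b, c)`.
-/

open Matrix

section

variable {𝕜 : Type*} [RCLike 𝕜] {m n : Type*} [Fintype m] [Fintype n]

theorem norm_dotProduct_sq_le (a b : n → 𝕜) :
    ‖a ⬝ᵥ b‖ ^ 2 ≤ (∑ i, ‖a i‖ ^ 2) * ∑ i, ‖b i‖ ^ 2 := by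
  have h := norm_inner_le_norm (𝕜 := 𝕜) (WithLp.toLp 2 (star a)) (WithLp.toLp 2 b)
  rw [EuclideanSpace.inner_toLp_toLp, star_star, dotProduct_comm] at h
  have h2 := pow_le_pow_left₀ (norm_nonneg _) h 2
  simpa [mul_pow, EuclideanSpace.norm_sq_eq] using h2

theorem sum_norm_sq_mulVec_le (X : Matrix m n 𝕜) (s : n → 𝕜) :
    ∑ j, ‖(X *ᵥ s) j‖ ^ 2 ≤ (∑ j, ∑ k, ‖X j k‖ ^ 2) * ∑ k, ‖s k‖ ^ 2 := by
  rw [Finset.sum_mul]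
  exact Finset.sum_le_sum fun j _ => norm_dotProduct_sq_le (X j) s

theorem sum_norm_sq_sub_star_mul_dotProduct (u z : m → 𝕜) (hu : ∑ j, ‖u j‖ ^ 2 = 1) :
    ∑ j, ‖z j - star (u j) * (u ⬝ᵥ z)‖ ^ 2 = ∑ j, ‖z j‖ ^ 2 - ‖u ⬝ᵥ z‖ ^ 2 := by
  set e := WithLp.toLp 2 (star u)
  have he : ‖e‖ = 1 := by
    rw [← pow_eq_one_iff_of_nonneg (norm_nonneg _) two_ne_zero, EuclideanSpace.norm_sq_eq]
    simpa [e] using hu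
  have hinner : inner 𝕜 e (WithLp.toLp 2 z) = u ⬝ᵥ z := by
    rw [EuclideanSpace.inner_toLp_toLp, star_star, dotProduct_comm]
  have hre : RCLike.re ((u ⬝ᵥ z) * starRingEnd 𝕜 (u ⬝ᵥ z)) = ‖u ⬝ᵥ z‖ ^ 2 := by
    rw [RCLike.mul_conj]
    simp
  have h := norm_sub_sq (𝕜 := 𝕜) (WithLp.toLp 2 z) ((u ⬝ᵥ z) • e)
  rw [inner_smul_right, ← inner_conj_symm, hinner, norm_smul, he, mul_one, hre] at h
  simp only [EuclideanSpace.norm_sq_eq] at h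
  convert h using 2
  · simp [e, mul_comm]
  · ring

theorem sum_norm_sq_vecMul_add_sum_norm_sq_mulVec_le (X : Matrix m n 𝕜) {u : m → 𝕜} {s : n → 𝕜}
    (hu : ∑ j, ‖u j‖ ^ 2 = 1) (hs : ∑ k, ‖s k‖ ^ 2 = 1) :
    ∑ k, ‖(u ᵥ* X) k‖ ^ 2 + ∑ j, ‖(X *ᵥ s) j‖ ^ 2 ≤
      ∑ j, ∑ k, ‖X j k‖ ^ 2 + ‖u ⬝ᵥ X *ᵥ s‖ ^ 2 := by
  -- The columns of `Y` are those of `X` projected onto the orthogonal complement of `star u`.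
  set Y := X - vecMulVec (star u) (u ᵥ* X)
  have hcol (k : n) : ∑ j, ‖Y j k‖ ^ 2 = ∑ j, ‖X j k‖ ^ 2 - ‖(u ᵥ* X) k‖ ^ 2 :=
    sum_norm_sq_sub_star_mul_dotProduct u (fun j => X j k) hu
  have hrow : ∑ j, ‖(Y *ᵥ s) j‖ ^ 2 = ∑ j, ‖(X *ᵥ s) j‖ ^ 2 - ‖u ⬝ᵥ X *ᵥ s‖ ^ 2 := by
    rw [← sum_norm_sq_sub_star_mul_dotProduct u (X *ᵥ s) hu]
    simp [Y, sub_mulVec, vecMulVec_mulVec, dotProduct_mulVec, mul_comm]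
  have hcs := sum_norm_sq_mulVec_le Y s
  rw [hs, mul_one, Finset.sum_comm, Finset.sum_congr rfl fun k _ => hcol k,
    Finset.sum_sub_distrib, Finset.sum_comm, hrow] at hcs
  linarith

theorem exists_sum_norm_sq_eq_one_forall_dotProduct_eq_zero {ι : Type*} [Fintype ι]
    (v : ι → n → 𝕜) (h : Fintype.card ι < Fintype.card n) :
    ∃ s : n → 𝕜, ∑ k, ‖s k‖ ^ 2 = 1 ∧ ∀ i, v i ⬝ᵥ s = 0 := by
  obtain ⟨s, hs, hs0⟩ := (Submodule.ne_bot_iff _).mp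
    (LinearMap.ker_ne_bot_of_finrank_lt (f := (of v).mulVecLin) (by simpa))
  have hx : ‖WithLp.toLp 2 s‖ ≠ 0 := by simpa using hs0
  refine ⟨(‖WithLp.toLp 2 s‖⁻¹ : 𝕜) • s, ?_, fun i => ?_⟩
  · rw [← EuclideanSpace.norm_sq_eq (WithLp.toLp 2 _), WithLp.toLp_smul, norm_smul]
    simp [hx]
  · rw [dotProduct_smul, smul_eq_zero]
    exact Or.inr (congrFun hs i)

theorem OrthonormalBasis.sum_norm_sq_dotProduct (b : OrthonormalBasis n 𝕜 (EuclideanSpace 𝕜 n))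
    (t : n → 𝕜) : ∑ p, ‖⇑(b p) ⬝ᵥ t‖ ^ 2 = ∑ i, ‖t i‖ ^ 2 := by
  have h := b.sum_sq_norm_inner_right (WithLp.toLp 2 (star t))
  simp only [EuclideanSpace.inner_eq_star_dotProduct, EuclideanSpace.norm_sq_eq] at h
  convert h using 2 with p _ i
  · rw [star_dotProduct_star, norm_star]
  · simp

theorem re_star_dotProduct_mul_conjTranspose_mulVec (M : Matrix m n 𝕜) (x : m → 𝕜) :
    RCLike.re (star x ⬝ᵥ (M * Mᴴ) *ᵥ x) = ∑ k, ‖(Mᴴ *ᵥ x) k‖ ^ 2 := by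
  rw [← mulVec_mulVec, dotProduct_mulVec, ← conjTranspose_conjTranspose M, ← star_mulVec,
    conjTranspose_conjTranspose]
  simp [dotProduct, RCLike.conj_mul]

namespace Matrix.IsHermitian

variable [DecidableEq n] {A : Matrix n n 𝕜}

theorem re_star_dotProduct_mulVec_eq_sum (hA : A.IsHermitian) (x : n → 𝕜) :
    RCLike.re (star x ⬝ᵥ A *ᵥ x) =
      ∑ i, hA.eigenvalues i * ‖inner 𝕜 (hA.eigenvectorBasis i) (WithLp.toLp 2 x)‖ ^ 2 := by
  set b := hA.eigenvectorBasis
  have hx : x = ∑ i, inner 𝕜 (b i) (WithLp.toLp 2 x) • ⇑(b i) := by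
    conv_lhs => rw [← WithLp.ofLp_toLp 2 x, ← b.sum_repr' (WithLp.toLp 2 x)]
    simp
  have hAx : A *ᵥ x = ∑ i, inner 𝕜 (b i) (WithLp.toLp 2 x) • hA.eigenvalues i • ⇑(b i) := by
    conv_lhs => rw [hx]
    simp [b, mulVec_sum, mulVec_smul, hA.mulVec_eigenvectorBasis]
  have hxb (i : n) : star x ⬝ᵥ ⇑(b i) = starRingEnd 𝕜 (inner 𝕜 (b i) (WithLp.toLp 2 x)) := by
    rw [inner_conj_symm, EuclideanSpace.inner_eq_star_dotProduct, dotProduct_comm]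
  rw [hAx, dotProduct_sum, map_sum]
  refine Finset.sum_congr rfl fun i _ => ?_
  rw [dotProduct_smul, dotProduct_smul, hxb, RCLike.real_smul_eq_coe_mul, smul_eq_mul,
    mul_left_comm, RCLike.mul_conj]
  simp

theorem mul_sum_norm_sq_le_re_star_dotProduct_mulVec (hA : A.IsHermitian) {c : ℝ}
    (hc : ∀ i, c ≤ hA.eigenvalues i) (x : n → 𝕜) :
    c * ∑ i, ‖x i‖ ^ 2 ≤ RCLike.re (star x ⬝ᵥ A *ᵥ x) := by
  rw [hA.re_star_dotProduct_mulVec_eq_sum, ← EuclideanSpace.norm_sq_eq (WithLp.toLp 2 x),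
    ← hA.eigenvectorBasis.sum_sq_norm_inner_right, Finset.mul_sum]
  exact Finset.sum_le_sum fun i _ => mul_le_mul_of_nonneg_right (hc i) (by positivity)

end Matrix.IsHermitian

end

namespace IsOrderedSpectrum

variable {M : Matrix (Fin 3) (Fin 3) ℂ} {l : Fin 3 → ℝ}

theorem exists_orthonormalBasis (h : IsOrderedSpectrum M l) :
    ∃ b : OrthonormalBasis (Fin 3) ℂ (EuclideanSpace ℂ (Fin 3)),
      ∀ i, l i = (star ⇑(b i) ⬝ᵥ M *ᵥ ⇑(b i)).re := by
  obtain ⟨-, hM, σ, hl⟩ := h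
  exact ⟨hM.eigenvectorBasis.reindex σ.symm, fun i => by simp [hl, hM.eigenvalues_eq]⟩

theorem le_re_star_dotProduct_mulVec (h : IsOrderedSpectrum M l) {x : Fin 3 → ℂ}
    (hx : ∑ k, ‖x k‖ ^ 2 = 1) : l 0 ≤ (star x ⬝ᵥ M *ᵥ x).re := by
  obtain ⟨hmono, hM, σ, hl⟩ := h
  have hmin (p : Fin 3) : l 0 ≤ hM.eigenvalues p := by
    simpa [hl] using hmono (Fin.zero_le (σ.symm p))
  simpa [hx] using hM.mul_sum_norm_sq_le_re_star_dotProduct_mulVec hmin x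

theorem sum_eq_re_trace (h : IsOrderedSpectrum M l) : l 0 + l 1 + l 2 = M.trace.re := by
  obtain ⟨-, hM, σ, hl⟩ := h
  rw [hM.trace_eq_sum_eigenvalues, ← Equiv.sum_comp σ]
  simp [Fin.sum_univ_three, hl]

end IsOrderedSpectrum

section Qutrits

variable (c : Fin 3 → Fin 3 → Fin 3 → ℂ)

theorem rho1_eq_mul_conjTranspose :
    rho1 c = (of fun i (p : Fin 3 × Fin 3) => c i p.1 p.2) *
      (of fun i (p : Fin 3 × Fin 3) => c i p.1 p.2)ᴴ := by
  ext i i'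
  simp [rho1, mul_apply, Fintype.sum_prod_type]

theorem rho2_eq_mul_conjTranspose :
    rho2 c = (of fun j (p : Fin 3 × Fin 3) => c p.1 j p.2) *
      (of fun j (p : Fin 3 × Fin 3) => c p.1 j p.2)ᴴ := by
  ext j j'
  simp [rho2, mul_apply, Fintype.sum_prod_type]

theorem rho3_eq_mul_conjTranspose :
    rho3 c = (of fun k (p : Fin 3 × Fin 3) => c p.1 p.2 k) *
      (of fun k (p : Fin 3 × Fin 3) => c p.1 p.2 k)ᴴ := by
  ext k k'
  simp [rho3, mul_apply, Fintype.sum_prod_type]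

theorem re_star_dotProduct_rho1_mulVec (x : Fin 3 → ℂ) :
    (star x ⬝ᵥ rho1 c *ᵥ x).re = ∑ j, ∑ k, ‖∑ i, star (c i j k) * x i‖ ^ 2 := by
  rw [rho1_eq_mul_conjTranspose, ← RCLike.re_to_complex,
    re_star_dotProduct_mul_conjTranspose_mulVec, Fintype.sum_prod_type]
  simp [mulVec, dotProduct]

theorem re_star_dotProduct_rho2_mulVec (x : Fin 3 → ℂ) :
    (star x ⬝ᵥ rho2 c *ᵥ x).re = ∑ i, ∑ k, ‖∑ j, star (c i j k) * x j‖ ^ 2 := by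
  rw [rho2_eq_mul_conjTranspose, ← RCLike.re_to_complex,
    re_star_dotProduct_mul_conjTranspose_mulVec, Fintype.sum_prod_type]
  simp [mulVec, dotProduct]

theorem re_star_dotProduct_rho3_mulVec (x : Fin 3 → ℂ) :
    (star x ⬝ᵥ rho3 c *ᵥ x).re = ∑ i, ∑ j, ‖∑ k, star (c i j k) * x k‖ ^ 2 := by
  rw [rho3_eq_mul_conjTranspose, ← RCLike.re_to_complex,
    re_star_dotProduct_mul_conjTranspose_mulVec, Fintype.sum_prod_type]
  simp [mulVec, dotProduct]

theorem re_trace_rho1 : (rho1 c).trace.re = ∑ i, ∑ j, ∑ k, ‖c i j k‖ ^ 2 := by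
  simp [trace, rho1, Complex.mul_conj', ← Complex.ofReal_pow]

theorem re_trace_rho2 : (rho2 c).trace.re = ∑ i, ∑ j, ∑ k, ‖c i j k‖ ^ 2 := by
  simp [trace, rho2, Complex.mul_conj', ← Complex.ofReal_pow]
  exact Finset.sum_comm

theorem re_trace_rho3 : (rho3 c).trace.re = ∑ i, ∑ j, ∑ k, ‖c i j k‖ ^ 2 := by
  simp [trace, rho3, Complex.mul_conj', ← Complex.ofReal_pow]
  rw [Finset.sum_comm]
  exact Finset.sum_congr rfl fun _ _ => Finset.sum_comm

theorem max_eig_rho2_add_min_eig_rho3_le {lA lB lC : Fin 3 → ℝ}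
    (hA : IsOrderedSpectrum (rho1 c) lA) (hB : IsOrderedSpectrum (rho2 c) lB)
    (hC : IsOrderedSpectrum (rho3 c) lC) :
    lB 2 + lC 0 ≤ ∑ i, ∑ j, ∑ k, ‖c i j k‖ ^ 2 + lA 0 := by
  obtain ⟨f, hf⟩ := hA.exists_orthonormalBasis
  obtain ⟨e, he⟩ := hB.exists_orthonormalBasis
  set u : Fin 3 → ℂ := ⇑(e 2)
  have hu : ∑ j, ‖u j‖ ^ 2 = 1 := by simp [u, ← EuclideanSpace.norm_sq_eq]
  set X : Fin 3 → Matrix (Fin 3) (Fin 3) ℂ := fun i => of fun j k => star (c i j k)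
  set G : Fin 3 → Matrix (Fin 3) (Fin 3) ℂ := fun p => ∑ i, f p i • X i
  -- Two linear conditions on `s`, making `⇑(f p) ⬝ᵥ t = 0` for `p ≠ 0` (see `hft`).
  obtain ⟨s, hs, hs0⟩ := exists_sum_norm_sq_eq_one_forall_dotProduct_eq_zero
    (fun p : {p : Fin 3 // p ≠ 0} => u ᵥ* G p) (by simp)
  set t : Fin 3 → ℂ := fun i => u ⬝ᵥ X i *ᵥ s
  have hft (p : Fin 3) : ⇑(f p) ⬝ᵥ t = u ⬝ᵥ G p *ᵥ s := by
    simp only [t, G, sum_mulVec, smul_mulVec, dotProduct_sum, dotProduct_smul, smul_eq_mul]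
    rfl
  have hlB : lB 2 = ∑ i, ∑ k, ‖(u ᵥ* X i) k‖ ^ 2 := by
    rw [he, re_star_dotProduct_rho2_mulVec]
    simp [u, X, vecMul, dotProduct, mul_comm]
  have hlC : lC 0 ≤ ∑ i, ∑ j, ‖(X i *ᵥ s) j‖ ^ 2 := by
    have h := hC.le_re_star_dotProduct_mulVec hs
    rw [re_star_dotProduct_rho3_mulVec] at h
    simpa [X, mulVec, dotProduct] using h
  have hlA : lA 0 = ∑ j, ∑ k, ‖G 0 j k‖ ^ 2 := by
    rw [hf, re_star_dotProduct_rho1_mulVec]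
    simp [G, X, Matrix.sum_apply, mul_comm]
  have hproj : ∑ i, (∑ k, ‖(u ᵥ* X i) k‖ ^ 2 + ∑ j, ‖(X i *ᵥ s) j‖ ^ 2) ≤
      ∑ i, (∑ j, ∑ k, ‖X i j k‖ ^ 2 + ‖t i‖ ^ 2) :=
    Finset.sum_le_sum fun i _ => sum_norm_sq_vecMul_add_sum_norm_sq_mulVec_le (X i) hu hs
  have ht : ∑ i, ‖t i‖ ^ 2 = ‖u ⬝ᵥ G 0 *ᵥ s‖ ^ 2 := by
    rw [← f.sum_norm_sq_dotProduct t, Fintype.sum_eq_single 0 fun p hp => ?_, hft]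
    rw [hft, dotProduct_mulVec, hs0 ⟨p, hp⟩, norm_zero, zero_pow two_ne_zero]
  have hcs : ‖u ⬝ᵥ G 0 *ᵥ s‖ ^ 2 ≤ ∑ j, ∑ k, ‖G 0 j k‖ ^ 2 := calc
    _ ≤ (∑ j, ‖u j‖ ^ 2) * ∑ j, ‖(G 0 *ᵥ s) j‖ ^ 2 := norm_dotProduct_sq_le _ _
    _ ≤ _ := by simpa [hu, hs] using sum_norm_sq_mulVec_le (G 0) s
  simp only [Finset.sum_add_distrib, X, of_apply, norm_star] at hproj
  linarith

theorem spectral_ineq_rho1_rho2_rho3 {lA lB lC : Fin 3 → ℝ}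
    (hA : IsOrderedSpectrum (rho1 c) lA) (hB : IsOrderedSpectrum (rho2 c) lB)
    (hC : IsOrderedSpectrum (rho3 c) lC) :
    lA 1 + lA 2 ≤ lB 1 + lB 0 + lC 1 + lC 2 := by
  have hkey := max_eig_rho2_add_min_eig_rho3_le c hA hB hC
  have htrA := hA.sum_eq_re_trace
  have htrB := hB.sum_eq_re_trace
  have htrC := hC.sum_eq_re_trace
  rw [re_trace_rho1] at htrA
  rw [re_trace_rho2] at htrB
  rw [re_trace_rho3] at htrC
  linarith

@[simp] theorem rho1_swap : rho1 (Function.swap c) = rho2 c := rfl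

@[simp] theorem rho2_swap : rho2 (Function.swap c) = rho1 c := rfl

@[simp] theorem rho3_swap : rho3 (Function.swap c) = rho3 c := by
  ext k k'
  simp only [rho3, of_apply]
  exact Finset.sum_comm

@[simp] theorem rho1_comp_swap : rho1 (Function.swap ∘ c) = rho1 c := by
  ext i i'
  simp only [rho1, of_apply]
  exact Finset.sum_comm

@[simp] theorem rho2_comp_swap : rho2 (Function.swap ∘ c) = rho3 c := rfl

@[simp] theorem rho3_comp_swap : rho3 (Function.swap ∘ c) = rho2 c := rfl

end Qutrits

theorem three_qutrit_ineq3_general (c : Fin 3 → Fin 3 → Fin 3 → ℂ)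
    (l : Fin 3 → Fin 3 → ℝ)
    (h1 : IsOrderedSpectrum (rho1 c) (l 0))
    (h2 : IsOrderedSpectrum (rho2 c) (l 1))
    (h3 : IsOrderedSpectrum (rho3 c) (l 2)) :
    ∀ a b c' : Fin 3, a ≠ b → a ≠ c' → b ≠ c' →
      l a 1 + l a 2 ≤ l b 1 + l b 0 + l c' 1 + l c' 2 := by
  intro a b c' hab hac hbc
  fin_cases a <;> fin_cases b <;> fin_cases c' <;>
    simp only [ne_eq, not_true_eq_false] at hab hac hbc
  · exact spectral_ineq_rho1_rho2_rho3 c h1 h2 h3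
  · exact spectral_ineq_rho1_rho2_rho3 (Function.swap ∘ c) (by simpa) (by simpa) (by simpa)
  · exact spectral_ineq_rho1_rho2_rho3 (Function.swap c) (by simpa) (by simpa) (by simpa)
  · exact spectral_ineq_rho1_rho2_rho3 (Function.swap ∘ Function.swap c)
      (by simpa) (by simpa) (by simpa)
  · exact spectral_ineq_rho1_rho2_rho3 (Function.swap (Function.swap ∘ c))
      (by simpa) (by simpa) (by simpa)
  · exact spectral_ineq_rho1_rho2_rho3 (Function.swap ∘ Function.swap (Function.swap ∘ c))
      (by simpa) (by simpa) (by simpa)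

theorem three_qutrit_ineq3 (c : Fin 3 → Fin 3 → Fin 3 → ℂ)
    (hnorm : ∑ i : Fin 3, ∑ j : Fin 3, ∑ k : Fin 3, ‖c i j k‖ ^ 2 = 1)
    (l : Fin 3 → Fin 3 → ℝ)
    (h1 : IsOrderedSpectrum (rho1 c) (l 0))
    (h2 : IsOrderedSpectrum (rho2 c) (l 1))
    (h3 : IsOrderedSpectrum (rho3 c) (l 2)) :
    ∀ a b c' : Fin 3, a ≠ b → a ≠ c' → b ≠ c' →
      l a 1 + l a 2 ≤ l b 1 + l b 0 + l c' 1 + l c' 2 :=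
  three_qutrit_ineq3_general c l h1 h2 h3
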